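/- Let φ be a faithful normal state on a von Neumann algebra M acting on a complex Hilbert space H, and let a be a hermitian sesquilinear form on D_φ satisfying: there is a constant c ∈ ℂ such that for every representation (f_i)_{i∈I} of φ, the family (a(f_i, f_i))_{i∈I} is absolutely summable with sum c. Suppose (g_i)_{i∈I}, (h_j)_{j∈J}, (l_k)_{k∈K} are families of vectors of H such that for every x ∈ M⁺ the families (⟨x g_i, g_i⟩)_{i∈I}, (⟨x h_j, h_j⟩)_{j∈J}, (⟨x l_k, l_k⟩)_{k∈K} are summable and Σ_{i∈I} ⟨x g_i, g_i⟩ + Σ_{k∈K} ⟨x l_k, l_k⟩ = φ(x) = Σ_{j∈J} ⟨x h_j, h_j⟩ + Σ_{k∈K} ⟨x l_k, l_k⟩. Then all g_i, h_j, l_k belong to D_φ, the families (a(g_i, g_i))_{i∈I} and (a(h_j, h_j))_{j∈J} are absolutely summable, and Σ_{i∈I} a(g_i, g_i) = Σ_{j∈J} a(h_j, h_j). -/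

import Mathlib

open scoped ComplexOrder
open Filter Topology

noncomputable section

namespace VNState

variable {H : Type*} [NormedAddCommGroup H] [InnerProductSpace ℂ H] [CompleteSpace H]
  {M : VonNeumannAlgebra H}

/-- An element of a von Neumann algebra `M` (viewed as the subtype of `B(H)` given by
its underlying star subalgebra) belongs to `M⁺` if it is positive as an operator. -/
def IsPos (x : ↥M.toStarSubalgebra) : Prop :=
  (x : H →L[ℂ] H).IsPositive

/-- A linear functional `φ` on `M` is a state if it is positive and `φ(1) = 1`. -/
def IsState (φ : ↥M.toStarSubalgebra →ₗ[ℂ] ℂ) : Prop :=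
  (∀ x : ↥M.toStarSubalgebra, IsPos x → 0 ≤ φ x) ∧ φ 1 = 1

/-- A state `φ` is faithful if `x ∈ M⁺` and `φ(x) = 0` imply `x = 0`. -/
def IsFaithful (φ : ↥M.toStarSubalgebra →ₗ[ℂ] ℂ) : Prop :=
  ∀ x : ↥M.toStarSubalgebra, IsPos x → φ x = 0 → x = 0

/-- A representation of `φ`: a family `(f_i)` of vectors of `H` such that for every
`x ∈ M⁺` the family `(⟨x f_i, f_i⟩)` is summable with sum `φ(x)`. A functional is
normal iff it admits at least one representation. -/
def IsRepresentation (φ : ↥M.toStarSubalgebra →ₗ[ℂ] ℂ) {I : Type*} (f : I → H) : Prop :=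
  ∀ x : ↥M.toStarSubalgebra, IsPos x →
    HasSum (fun i => (inner ℂ ((x : H →L[ℂ] H) (f i)) (f i) : ℂ)) (φ x)

/-- The lineal of `φ`: `D_φ = {f ∈ H : ∃ λ > 0, ⟨x f, f⟩ ≤ λ φ(x) for all x ∈ M⁺}`. -/
def lineal (φ : ↥M.toStarSubalgebra →ₗ[ℂ] ℂ) : Set H :=
  {f | ∃ l : ℝ, 0 < l ∧ ∀ x : ↥M.toStarSubalgebra, IsPos x →
    (inner ℂ ((x : H →L[ℂ] H) f) f : ℂ) ≤ (l : ℂ) * φ x}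

/-- The norm `‖x‖_φ = inf {Re φ(x₁ + x₂) : x = x₁ − x₂, x₁, x₂ ∈ M⁺}` on `M^sa`. -/
def stateNorm (φ : ↥M.toStarSubalgebra →ₗ[ℂ] ℂ) (x : ↥M.toStarSubalgebra) : ℝ :=
  sInf {r : ℝ | ∃ x₁ x₂ : ↥M.toStarSubalgebra, IsPos x₁ ∧ IsPos x₂ ∧
    x = x₁ - x₂ ∧ r = (φ (x₁ + x₂)).re}

/-- A hermitian sesquilinear form on a subset `D` of `H`: linear in the first
argument, conjugate-linear in the second, with `a(g,f) = conj (a(f,g))`. -/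
structure IsHermitianSesqOn (D : Set H) (a : H → H → ℂ) : Prop where
  add_left : ∀ f₁ f₂ g : H, f₁ ∈ D → f₂ ∈ D → g ∈ D →
    a (f₁ + f₂) g = a f₁ g + a f₂ g
  smul_left : ∀ (c : ℂ) (f g : H), f ∈ D → g ∈ D → a (c • f) g = c * a f g
  add_right : ∀ f g₁ g₂ : H, f ∈ D → g₁ ∈ D → g₂ ∈ D →
    a f (g₁ + g₂) = a f g₁ + a f g₂
  smul_right : ∀ (c : ℂ) (f g : H), f ∈ D → g ∈ D →
    a f (c • g) = starRingEnd ℂ c * a f g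
  hermitian : ∀ f g : H, f ∈ D → g ∈ D → a g f = starRingEnd ℂ (a f g)

end VNState

open VNState

/-!
Appending the common family `l` to `g`, resp. to `h`, gives two representations of `φ`. Every
vector of a representation lies in `D_φ` (with `λ = 1`), and the hypothesis on `a` gives
`Σ a(g_i, g_i) + Σ a(l_k, l_k) = c = Σ a(h_j, h_j) + Σ a(l_k, l_k)`; cancel `Σ a(l_k, l_k)`.
-/

universe u

lemma hasSum_comp_shrink_support_iff {X E α : Type*} [Zero E] [AddCommMonoid α]
    [TopologicalSpace α] (f : X → E) [Small.{u} (Function.support f)] {t : E → α}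
    (ht : t 0 = 0) {s : α} :
    HasSum (fun n : Shrink.{u} (Function.support f) =>
      t (f ((equivShrink (Function.support f)).symm n))) s ↔
      HasSum (fun x => t (f x)) s :=
  (equivShrink _).symm.hasSum_iff.trans
    (hasSum_subtype_iff_of_support_subset (Function.support_comp_subset ht f))

namespace VNState

lemma IsHermitianSesqOn.apply_zero_zero {H : Type*} [NormedAddCommGroup H]
    [InnerProductSpace ℂ H] {D : Set H} {a : H → H → ℂ} (ha : IsHermitianSesqOn D a)
    (h0 : (0 : H) ∈ D) : a 0 0 = 0 := by
  simpa using ha.smul_left 0 0 0 h0 h0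

variable {H : Type*} [NormedAddCommGroup H] [InnerProductSpace ℂ H] [CompleteSpace H]
  {M : VonNeumannAlgebra H} {φ : ↥M.toStarSubalgebra →ₗ[ℂ] ℂ} {a : H → H → ℂ} {c : ℂ}

lemma isPos_one : IsPos (1 : ↥M.toStarSubalgebra) :=
  ContinuousLinearMap.isPositive_one

lemma IsPos.inner_apply_self_nonneg {x : ↥M.toStarSubalgebra} (hx : IsPos x) (v : H) :
    0 ≤ (inner ℂ ((x : H →L[ℂ] H) v) v : ℂ) :=
  ContinuousLinearMap.IsPositive.inner_nonneg_left hx v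

lemma zero_mem_lineal (hφ : ∀ x : ↥M.toStarSubalgebra, IsPos x → 0 ≤ φ x) :
    (0 : H) ∈ lineal φ :=
  ⟨1, one_pos, fun x hx => by simpa using hφ x hx⟩

lemma IsRepresentation.mem_lineal {I : Type*} {f : I → H} (hf : IsRepresentation φ f)
    (i : I) : f i ∈ lineal φ :=
  ⟨1, one_pos, fun x hx => by
    simpa using le_hasSum (hf x hx) i fun j _ => hx.inner_apply_self_nonneg (f j)⟩

lemma isRepresentation_sumElim {I K : Type*} {g : I → H} {l : K → H}
    (hgl : ∀ x : ↥M.toStarSubalgebra, IsPos x → ∃ sg sl : ℂ,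
      HasSum (fun i => (inner ℂ ((x : H →L[ℂ] H) (g i)) (g i) : ℂ)) sg ∧
      HasSum (fun k => (inner ℂ ((x : H →L[ℂ] H) (l k)) (l k) : ℂ)) sl ∧ sg + sl = φ x) :
    IsRepresentation φ (Sum.elim g l) := fun x hx => by
  obtain ⟨sg, sl, hg, hl, hsum⟩ := hgl x hx
  rw [← hsum]
  exact HasSum.sum
    (f := fun p => (inner ℂ ((x : H →L[ℂ] H) (Sum.elim g l p)) (Sum.elim g l p) : ℂ)) hg hl

lemma IsRepresentation.countable_support {I : Type*} {f : I → H}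
    (hf : IsRepresentation φ f) : (Function.support f).Countable := by
  refine (hf 1 isPos_one).summable.countable_support.mono fun i hi => ?_
  simpa using hi

/-- Reindexing by `Shrink.{u}` of the (countable) support lets `hc`, which only speaks of index
types in the universe `u`, apply to representations indexed in any universe. -/
lemma IsRepresentation.summable_norm_diag_and_hasSum (ha0 : a 0 0 = 0)
    (hc : ∀ {I : Type u} (f : I → H), IsRepresentation φ f →
      Summable (fun i => ‖a (f i) (f i)‖) ∧ HasSum (fun i => a (f i) (f i)) c)
    {X : Type*} {f : X → H} (hf : IsRepresentation φ f) :
    Summable (fun x => ‖a (f x) (f x)‖) ∧ HasSum (fun x => a (f x) (f x)) c := by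
  have : Small.{u} (Function.support f) := @Countable.toSmall _ hf.countable_support.to_subtype
  have hF : IsRepresentation φ fun n : Shrink.{u} (Function.support f) =>
      f ((equivShrink (Function.support f)).symm n) := fun x hx =>
    (hasSum_comp_shrink_support_iff f (t := fun v => inner ℂ ((x : H →L[ℂ] H) v) v)
      (by simp)).2 (hf x hx)
  obtain ⟨hnorm, hsum⟩ := hc _ hF
  exact ⟨((hasSum_comp_shrink_support_iff f (t := fun v => ‖a v v‖) (by simp [ha0])).1
    hnorm.hasSum).summable, (hasSum_comp_shrink_support_iff f (t := fun v => a v v) ha0).1 hsum⟩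

lemma IsRepresentation.summable_norm_diag_and_tsum_add_tsum (ha0 : a 0 0 = 0)
    (hc : ∀ {I : Type u} (f : I → H), IsRepresentation φ f →
      Summable (fun i => ‖a (f i) (f i)‖) ∧ HasSum (fun i => a (f i) (f i)) c)
    {I K : Type*} {g : I → H} {l : K → H} (hgl : IsRepresentation φ (Sum.elim g l)) :
    Summable (fun i => ‖a (g i) (g i)‖) ∧ ∑' i, a (g i) (g i) + ∑' k, a (l k) (l k) = c := by
  obtain ⟨hnorm, hsum⟩ := hgl.summable_norm_diag_and_hasSum ha0 hc
  have hg : Summable (fun i => ‖a (g i) (g i)‖) := (hnorm.comp_injective Sum.inl_injective :)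
  have hl : Summable (fun k => ‖a (l k) (l k)‖) := (hnorm.comp_injective Sum.inr_injective :)
  have hsplit := HasSum.sum (f := fun p => a (Sum.elim g l p) (Sum.elim g l p))
    hg.of_norm.hasSum hl.of_norm.hasSum
  exact ⟨hg, hsplit.unique hsum⟩

end VNState

theorem statement10_general {H : Type*} [NormedAddCommGroup H] [InnerProductSpace ℂ H]
    [CompleteSpace H] {M : VonNeumannAlgebra H}
    (φ : ↥M.toStarSubalgebra →ₗ[ℂ] ℂ) (hstate : IsState φ)
    (a : H → H → ℂ) (ha : IsHermitianSesqOn (lineal φ) a)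
    (c : ℂ)
    (hc : ∀ {I : Type*} (f : I → H), IsRepresentation φ f →
      Summable (fun i => ‖a (f i) (f i)‖) ∧ HasSum (fun i => a (f i) (f i)) c)
    {I J K : Type*} (g : I → H) (h : J → H) (l : K → H)
    (hsum : ∀ x : ↥M.toStarSubalgebra, IsPos x →
      ∃ sg sh sl : ℂ,
        HasSum (fun i => (inner ℂ ((x : H →L[ℂ] H) (g i)) (g i) : ℂ)) sg ∧
        HasSum (fun j => (inner ℂ ((x : H →L[ℂ] H) (h j)) (h j) : ℂ)) sh ∧
        HasSum (fun k => (inner ℂ ((x : H →L[ℂ] H) (l k)) (l k) : ℂ)) sl ∧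
        sg + sl = φ x ∧ sh + sl = φ x) :
    (∀ i, g i ∈ lineal φ) ∧ (∀ j, h j ∈ lineal φ) ∧ (∀ k, l k ∈ lineal φ) ∧
    Summable (fun i => ‖a (g i) (g i)‖) ∧ Summable (fun j => ‖a (h j) (h j)‖) ∧
    ∑' i, a (g i) (g i) = ∑' j, a (h j) (h j) := by
  have hGL : IsRepresentation φ (Sum.elim g l) := isRepresentation_sumElim fun x hx => by
    obtain ⟨sg, -, sl, hg, -, hl, hgl, -⟩ := hsum x hx
    exact ⟨sg, sl, hg, hl, hgl⟩
  have hHL : IsRepresentation φ (Sum.elim h l) := isRepresentation_sumElim fun x hx => by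
    obtain ⟨-, sh, sl, -, hh, hl, -, hhl⟩ := hsum x hx
    exact ⟨sh, sl, hh, hl, hhl⟩
  have ha0 : a 0 0 = 0 := ha.apply_zero_zero (zero_mem_lineal hstate.1)
  obtain ⟨hg, hgl⟩ := hGL.summable_norm_diag_and_tsum_add_tsum ha0 hc
  obtain ⟨hh, hhl⟩ := hHL.summable_norm_diag_and_tsum_add_tsum ha0 hc
  exact ⟨fun i => hGL.mem_lineal (.inl i), fun j => hHL.mem_lineal (.inl j),
    fun k => hGL.mem_lineal (.inr k), hg, hh, add_right_cancel (hgl.trans hhl.symm)⟩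

/-- Let `φ` be a faithful normal state on a von Neumann algebra `M`
acting on a complex Hilbert space `H`, and let `a` be a hermitian sesquilinear form on
`D_φ` such that there is a constant `c ∈ ℂ` such that for every representation
`(f_i)_{i∈I}` of `φ` the family `(a(f_i, f_i))_{i∈I}` is absolutely summable with sum
`c`. Suppose `(g_i)`, `(h_j)`, `(l_k)` are families of vectors of `H` such that for
every `x ∈ M⁺` the families `(⟨x g_i, g_i⟩)`, `(⟨x h_j, h_j⟩)`, `(⟨x l_k, l_k⟩)` are
summable and `Σ ⟨x g_i, g_i⟩ + Σ ⟨x l_k, l_k⟩ = φ(x) = Σ ⟨x h_j, h_j⟩ + Σ ⟨x l_k, l_k⟩`.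
Then all `g_i, h_j, l_k` belong to `D_φ`, the families `(a(g_i, g_i))` and
`(a(h_j, h_j))` are absolutely summable, and `Σ a(g_i, g_i) = Σ a(h_j, h_j)`. -/
theorem statement10 {H : Type*} [NormedAddCommGroup H] [InnerProductSpace ℂ H]
    [CompleteSpace H] {M : VonNeumannAlgebra H}
    (φ : ↥M.toStarSubalgebra →ₗ[ℂ] ℂ) (hstate : IsState φ) (hfaithful : IsFaithful φ)
    {I₀ : Type*} (f₀ : I₀ → H) (hnormal : IsRepresentation φ f₀)
    (a : H → H → ℂ) (ha : IsHermitianSesqOn (lineal φ) a)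
    (c : ℂ)
    (hc : ∀ {I : Type*} (f : I → H), IsRepresentation φ f →
      Summable (fun i => ‖a (f i) (f i)‖) ∧ HasSum (fun i => a (f i) (f i)) c)
    {I J K : Type*} (g : I → H) (h : J → H) (l : K → H)
    (hsum : ∀ x : ↥M.toStarSubalgebra, IsPos x →
      ∃ sg sh sl : ℂ,
        HasSum (fun i => (inner ℂ ((x : H →L[ℂ] H) (g i)) (g i) : ℂ)) sg ∧
        HasSum (fun j => (inner ℂ ((x : H →L[ℂ] H) (h j)) (h j) : ℂ)) sh ∧
        HasSum (fun k => (inner ℂ ((x : H →L[ℂ] H) (l k)) (l k) : ℂ)) sl ∧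
        sg + sl = φ x ∧ sh + sl = φ x) :
    (∀ i, g i ∈ lineal φ) ∧ (∀ j, h j ∈ lineal φ) ∧ (∀ k, l k ∈ lineal φ) ∧
    Summable (fun i => ‖a (g i) (g i)‖) ∧ Summable (fun j => ‖a (h j) (h j)‖) ∧
    ∑' i, a (g i) (g i) = ∑' j, a (h j) (h j) :=
  statement10_general φ hstate a ha c hc g h l hsum
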